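/- arXiv:1304.0643 — 2 statements merged into one kernel-verified Lean document; each statement's English description precedes it below -/
import Mathlib

section
/- Let (X,d) be a metric space and μ, ν Borel probability measures on X. Then W_∞(μ,ν) = lim_{p→∞} W_p(μ,ν), where W_p is the L^p-Wasserstein distance and W_∞(μ,ν) is the infimum over couplings σ of the essential supremum of d with respect to σ; moreover p ↦ W_p(μ,ν) is nondecreasing in p ∈ [1,∞). -/
open MeasureTheory Filter
open scoped ENNReal

/-- The set of couplings of two measures. -/
def couplingSet {X : Type*} [MeasurableSpace X] (μ ν : Measure X) :
    Set (Measure (X × X)) :=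
  {σ | σ.map Prod.fst = μ ∧ σ.map Prod.snd = ν}

/-- The `L^p`-Kantorovich–Rubinstein–Wasserstein distance. -/
noncomputable def Wp {X : Type*} [MeasurableSpace X] [MetricSpace X]
    (p : ℝ) (μ ν : Measure X) : ℝ≥0∞ :=
  ⨅ σ ∈ couplingSet μ ν,
    (∫⁻ z, ENNReal.ofReal (dist z.1 z.2) ^ p ∂σ) ^ (1 / p)

/-- The `L^∞`-Wasserstein distance: infimum over couplings of the essential
supremum of the distance. -/
noncomputable def Winf {X : Type*} [MeasurableSpace X] [MetricSpace X]
    (μ ν : Measure X) : ℝ≥0∞ :=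
  ⨅ σ ∈ couplingSet μ ν, essSup (fun z : X × X => ENNReal.ofReal (dist z.1 z.2)) σ


section AuxWasserstein

open Set Metric
open scoped NNReal Topology

set_option linter.unusedSectionVars false


section Ulim
variable (U : Ultrafilter ℕ)
private lemma exists_ulim (f : ℕ → ℝ≥0∞) : ∃ a, Tendsto f U (𝓝 a) := by
  obtain ⟨a, -, ha⟩ := isCompact_univ.ultrafilter_le_nhds (U.map f)
    (by simp [Filter.le_principal_iff])
  exact ⟨a, ha⟩
noncomputable def ulim (f : ℕ → ℝ≥0∞) : ℝ≥0∞ := (exists_ulim U f).choose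
lemma tendsto_ulim (f : ℕ → ℝ≥0∞) : Tendsto f U (𝓝 (ulim U f)) :=
  (exists_ulim U f).choose_spec
lemma ulim_eq {f : ℕ → ℝ≥0∞} {a : ℝ≥0∞} (h : Tendsto f U (𝓝 a)) : ulim U f = a :=
  tendsto_nhds_unique (tendsto_ulim U f) h
lemma ulim_le_ulim {f g : ℕ → ℝ≥0∞} (h : ∀ n, f n ≤ g n) : ulim U f ≤ ulim U g :=
  le_of_tendsto_of_tendsto' (tendsto_ulim U f) (tendsto_ulim U g) h
lemma ulim_const (a : ℝ≥0∞) : ulim U (fun _ => a) = a := ulim_eq U tendsto_const_nhds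
lemma ulim_le {f : ℕ → ℝ≥0∞} {a : ℝ≥0∞} (h : ∀ n, f n ≤ a) : ulim U f ≤ a :=
  (ulim_le_ulim U h).trans_eq (ulim_const U a)
lemma le_ulim {f : ℕ → ℝ≥0∞} {a : ℝ≥0∞} (h : ∀ n, a ≤ f n) : a ≤ ulim U f :=
  (ulim_const U a).symm.trans_le (ulim_le_ulim U h)
lemma ulim_add (f g : ℕ → ℝ≥0∞) : ulim U (fun n => f n + g n) = ulim U f + ulim U g :=
  ulim_eq U ((tendsto_ulim U f).add (tendsto_ulim U g))
lemma ulim_of_tendsto {f : ℕ → ℝ≥0∞} {a : ℝ≥0∞} (hU : (U : Filter ℕ) ≤ atTop)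
    (h : Tendsto f atTop (𝓝 a)) : ulim U f = a :=
  ulim_eq U (h.mono_left hU)
end Ulim

/-- Tightness: a finite Borel measure on a complete separable metric space is tight. -/
lemma exists_isCompact_measure_compl_le {α : Type*} [MetricSpace α] [CompleteSpace α]
    [TopologicalSpace.SeparableSpace α] [MeasurableSpace α] [OpensMeasurableSpace α]
    (μ : Measure α) [IsFiniteMeasure μ] {ε : ℝ≥0∞} (hε : ε ≠ 0) :
    ∃ K : Set α, IsCompact K ∧ μ Kᶜ ≤ ε := by
  rcases isEmpty_or_nonempty α with h | h
  · refine ⟨∅, isCompact_empty, ?_⟩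
    have : (∅ : Set α)ᶜ = (∅ : Set α) := by simp [eq_empty_of_isEmpty]
    rw [this]; simp
  set u : ℕ → α := TopologicalSpace.denseSeq α
  have hu : DenseRange u := TopologicalSpace.denseRange_denseSeq α
  have key : ∀ m : ℕ, ∃ N : ℕ,
      μ (⋃ i ≤ N, closedBall (u i) (1 / (m + 1)))ᶜ ≤ ε * (2 : ℝ≥0∞)⁻¹ ^ (m + 1) := by
    intro m
    set r : ℝ := 1 / (m + 1) with hr
    have hrpos : 0 < r := by positivity
    set S : ℕ → Set α := fun N => ⋃ i ≤ N, ball (u i) r with hS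
    have hmono : Monotone S := by
      intro a b hab x hx
      rw [mem_iUnion₂] at hx ⊢
      obtain ⟨i, hi, hx⟩ := hx
      exact ⟨i, hi.trans hab, hx⟩
    have hcover : ⋃ N, S N = univ := by
      apply eq_univ_of_forall
      intro x
      obtain ⟨i, hi⟩ := hu.exists_dist_lt x hrpos
      exact mem_iUnion.2 ⟨i, mem_iUnion₂.2 ⟨i, le_rfl, by simpa [dist_comm] using hi⟩⟩
    have htend : Tendsto (μ ∘ S) atTop (𝓝 (μ univ)) := by
      simpa [hcover] using tendsto_measure_iUnion_atTop (μ := μ) hmono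
    set δ : ℝ≥0∞ := ε * (2 : ℝ≥0∞)⁻¹ ^ (m + 1) with hδ
    have hδ0 : δ ≠ 0 := by
      simp only [hδ, ne_eq, mul_eq_zero, pow_eq_zero_iff', ENNReal.inv_eq_zero]
      push_neg
      exact ⟨hε, fun h2 => absurd h2 (by norm_num)⟩
    have hSmeas : ∀ N, MeasurableSet (S N) :=
      fun N => MeasurableSet.biUnion (to_countable _) fun i _ => measurableSet_ball
    have hgoal : ∃ N, μ (S N)ᶜ ≤ δ := by
      rcases le_or_gt (μ univ) δ with hcase | hcase
      · exact ⟨0, (measure_mono (subset_univ _)).trans hcase⟩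
      · have hlt : μ univ - δ < μ univ :=
          ENNReal.sub_lt_self (measure_ne_top μ _) (pos_of_gt hcase).ne' hδ0
        obtain ⟨N, hN⟩ := (htend.eventually (lt_mem_nhds hlt)).exists
        refine ⟨N, ?_⟩
        rw [measure_compl (hSmeas N) (measure_ne_top μ _)]
        rw [tsub_le_iff_right]
        have := tsub_le_iff_right.1 hN.le
        calc μ univ ≤ μ (S N) + δ := this
          _ = δ + μ (S N) := add_comm _ _
    obtain ⟨N, hN⟩ := hgoal
    refine ⟨N, le_trans (measure_mono ?_) hN⟩
    apply compl_subset_compl.2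
    intro x hx
    rw [mem_iUnion₂] at hx ⊢
    obtain ⟨i, hi, hx⟩ := hx
    exact ⟨i, hi, ball_subset_closedBall hx⟩
  choose N hN using key
  refine ⟨⋂ m, ⋃ i ≤ N m, closedBall (u i) (1 / (m + 1)), ?_, ?_⟩
  · apply TotallyBounded.isCompact_of_isClosed
    · rw [Metric.totallyBounded_iff]
      intro ε' hε'
      obtain ⟨m, hm⟩ := exists_nat_one_div_lt hε'
      refine ⟨u '' Iic (N m), (finite_Iic _).image u, ?_⟩
      refine (iInter_subset _ m).trans ?_
      intro x hx
      rw [mem_iUnion₂] at hx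
      obtain ⟨i, hi, hx⟩ := hx
      exact mem_biUnion (mem_image_of_mem u hi) (closedBall_subset_ball hm hx)
    · exact isClosed_iInter fun m =>
        (finite_Iic (N m)).isClosed_biUnion fun i _ => isClosed_closedBall
  · rw [compl_iInter]
    refine (measure_iUnion_le _).trans ?_
    calc ∑' m, μ (⋃ i ≤ N m, closedBall (u i) (1 / (m + 1)))ᶜ
        ≤ ∑' m, ε * (2 : ℝ≥0∞)⁻¹ ^ (m + 1) := ENNReal.tsum_le_tsum hN
      _ = ε * ∑' m, (2 : ℝ≥0∞)⁻¹ ^ (m + 1) := by rw [ENNReal.tsum_mul_left]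
      _ ≤ ε := by
          have hsum : ∑' m : ℕ, (2 : ℝ≥0∞)⁻¹ ^ (m + 1) = 1 := by
            rw [ENNReal.tsum_geometric_add_one, ENNReal.one_sub_inv_two, inv_inv]
            exact ENNReal.inv_mul_cancel (by norm_num) (by norm_num)
          rw [hsum, mul_one]


section Coupling

variable {X : Type*} [MeasurableSpace X] [MetricSpace X] [BorelSpace X]
  {μ ν : Measure X} [IsProbabilityMeasure μ] [IsProbabilityMeasure ν]

lemma isProbabilityMeasure_of_coupling {σ : Measure (X × X)} (h : σ ∈ couplingSet μ ν) :
    IsProbabilityMeasure σ := by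
  constructor
  have h1 : σ Set.univ = (σ.map Prod.fst) Set.univ := by
    rw [Measure.map_apply measurable_fst MeasurableSet.univ, Set.preimage_univ]
  rw [h1, h.1, measure_univ]

lemma coupling_fst {σ : Measure (X × X)} (h : σ ∈ couplingSet μ ν) {A : Set X}
    (hA : MeasurableSet A) : σ (Prod.fst ⁻¹' A) = μ A := by
  rw [← h.1, Measure.map_apply measurable_fst hA]

lemma coupling_snd {σ : Measure (X × X)} (h : σ ∈ couplingSet μ ν) {A : Set X}
    (hA : MeasurableSet A) : σ (Prod.snd ⁻¹' A) = ν A := by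
  rw [← h.2, Measure.map_apply measurable_snd hA]

/-- Two probability measures on a metric space which compare on open sets are equal. -/
lemma prob_measure_eq_of_le_open {α : Type*} [MeasurableSpace α] [MetricSpace α] [BorelSpace α]
    (μ' ρ : Measure α) [IsProbabilityMeasure μ'] [IsProbabilityMeasure ρ]
    (h : ∀ V : Set α, IsOpen V → μ' V ≤ ρ V) : ρ = μ' := by
  have hle : ∀ A : Set α, μ' A ≤ ρ A := by
    intro A
    rw [Set.measure_eq_iInf_isOpen (μ := ρ)]
    exact le_iInf fun V => le_iInf fun hAV => le_iInf fun hVo =>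
      (measure_mono hAV).trans (h V hVo)
  ext A hA
  have h1 := hle A
  have h2 := hle Aᶜ
  have hμ : μ' A + μ' Aᶜ = 1 := by rw [measure_add_measure_compl hA, measure_univ]
  have hρ : ρ A + ρ Aᶜ = 1 := by rw [measure_add_measure_compl hA, measure_univ]
  have hμ' : μ' A = 1 - μ' Aᶜ :=
    ENNReal.eq_sub_of_add_eq (measure_ne_top _ _) hμ
  have hρ' : ρ A = 1 - ρ Aᶜ :=
    ENNReal.eq_sub_of_add_eq (measure_ne_top _ _) hρ
  refine le_antisymm ?_ h1
  rw [hμ', hρ']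
  exact tsub_le_tsub_left h2 1

end Coupling

/-- The key compactness step: from a sequence of couplings putting asymptotically no
mass on an open set `G`, construct a coupling putting no mass on `G`. -/
lemma exists_coupling_limit {X : Type*} [MeasurableSpace X] [MetricSpace X]
    [BorelSpace X] [CompleteSpace X] [TopologicalSpace.SeparableSpace X]
    (μ ν : Measure X) [IsProbabilityMeasure μ] [IsProbabilityMeasure ν]
    (σ : ℕ → Measure (X × X)) (hσ : ∀ n, σ n ∈ couplingSet μ ν)
    (G : Set (X × X)) (hG : IsOpen G) (h0 : Tendsto (fun n => σ n G) atTop (𝓝 0)) :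
    ∃ τ ∈ couplingSet μ ν, τ G = 0 := by
  classical
  haveI : SecondCountableTopology X :=
    UniformSpace.secondCountable_of_separable X
  have hprob : ∀ n, IsProbabilityMeasure (σ n) :=
    fun n => isProbabilityMeasure_of_coupling (hσ n)
  set U : Ultrafilter ℕ := Ultrafilter.of atTop with hUdef
  have hUle : (U : Filter ℕ) ≤ atTop := Ultrafilter.of_le _
  set ℓ : Set (X × X) → ℝ≥0∞ := fun A => ulim U (fun n => σ n A) with hℓdef
  have hℓ_le_one : ∀ A, ℓ A ≤ 1 := fun A =>
    ulim_le U fun n => (hprob n).1 ▸ measure_mono (subset_univ A)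
  have hℓ_ne_top : ∀ A, ℓ A ≠ ⊤ := fun A => ((hℓ_le_one A).trans_lt ENNReal.one_lt_top).ne
  have hℓ_mono : ∀ {A B : Set (X × X)}, A ⊆ B → ℓ A ≤ ℓ B := fun hAB =>
    ulim_le_ulim U fun n => measure_mono hAB
  -- the content
  set C : Content (X × X) :=
    { toFun := fun K => (ℓ K).toNNReal
      mono' := fun K₁ K₂ h => ENNReal.toNNReal_mono (hℓ_ne_top _) (hℓ_mono h)
      sup_disjoint' := by
        intro K₁ K₂ hd h₁ h₂
        have hadd : ℓ ↑(K₁ ⊔ K₂) = ℓ ↑K₁ + ℓ ↑K₂ := by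
          have hfun : (fun n => σ n ↑(K₁ ⊔ K₂)) = fun n => σ n ↑K₁ + σ n ↑K₂ := by
            funext n
            rw [TopologicalSpace.Compacts.coe_sup]
            exact measure_union hd h₂.measurableSet
          rw [hℓdef]
          simp only [hfun]
          exact ulim_add U _ _
        simp only [hadd]
        exact ENNReal.toNNReal_add (hℓ_ne_top _) (hℓ_ne_top _)
      sup_le' := by
        intro K₁ K₂
        have h1 : ℓ ↑(K₁ ⊔ K₂) ≤ ℓ ↑K₁ + ℓ ↑K₂ := by
          rw [← ulim_add U]
          refine ulim_le_ulim U fun n => ?_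
          rw [TopologicalSpace.Compacts.coe_sup]
          exact measure_union_le _ _
        have := ENNReal.toNNReal_mono (by
          exact ENNReal.add_ne_top.2 ⟨hℓ_ne_top _, hℓ_ne_top _⟩) h1
        rwa [ENNReal.toNNReal_add (hℓ_ne_top _) (hℓ_ne_top _)] at this } with hCdef
  have hCK : ∀ K : TopologicalSpace.Compacts (X × X), (C K : ℝ≥0∞) = ℓ K := by
    intro K
    exact ENNReal.coe_toNNReal (hℓ_ne_top _)
  set τ : Measure (X × X) := C.measure with hτdef
  -- upper bound on open sets
  have hopen_le : ∀ V : Set (X × X), IsOpen V → τ V ≤ ℓ V := by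
    intro V hV
    rw [hτdef, C.measure_apply hV.measurableSet, C.outerMeasure_of_isOpen V hV]
    rw [show C.innerContent ⟨V, hV⟩
      = ⨆ (K : TopologicalSpace.Compacts (X × X)) (_ : (K : Set (X × X)) ⊆ V), (C K : ℝ≥0∞)
      from rfl]
    exact iSup₂_le fun K hK => (hCK K).le.trans (hℓ_mono hK)
  -- lower bound via compact subsets
  have hcpt_le : ∀ K : Set (X × X), IsCompact K → ∀ V : Set (X × X), IsOpen V → K ⊆ V →
      ℓ K ≤ τ V := by
    intro K hK V hV hKV
    rw [hτdef, C.measure_apply hV.measurableSet, C.outerMeasure_of_isOpen V hV]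
    have := C.le_innerContent ⟨K, hK⟩ ⟨V, hV⟩ hKV
    rwa [hCK ⟨K, hK⟩] at this
  -- τ is a probability measure
  have hτ_le_one : τ univ ≤ 1 := (hopen_le univ isOpen_univ).trans (hℓ_le_one _)
  have hτ_prob : IsProbabilityMeasure τ := by
    constructor
    refine le_antisymm hτ_le_one ?_
    refine ENNReal.le_of_forall_pos_le_add fun ε hε _ => ?_
    have hε2 : ((ε : ℝ≥0∞) / 2) ≠ 0 := by
      simp [ENNReal.div_eq_zero_iff, hε.ne']
    obtain ⟨K₁, hK₁, hK₁c⟩ := exists_isCompact_measure_compl_le μ hε2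
    obtain ⟨K₂, hK₂, hK₂c⟩ := exists_isCompact_measure_compl_le ν hε2
    have hbound : ∀ n, 1 ≤ σ n (K₁ ×ˢ K₂) + (ε : ℝ≥0∞) := by
      intro n
      have hsplit : ((K₁ ×ˢ K₂)ᶜ : Set (X × X)) ⊆
          (Prod.fst ⁻¹' K₁ᶜ) ∪ (Prod.snd ⁻¹' K₂ᶜ) := by
        intro z hz
        simp only [mem_compl_iff, mem_prod, not_and_or] at hz
        simpa only [mem_union, mem_preimage, mem_compl_iff] using hz
      have h2 : σ n ((K₁ ×ˢ K₂)ᶜ) ≤ (ε : ℝ≥0∞) := by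
        calc σ n ((K₁ ×ˢ K₂)ᶜ)
            ≤ σ n (Prod.fst ⁻¹' K₁ᶜ) + σ n (Prod.snd ⁻¹' K₂ᶜ) :=
              (measure_mono hsplit).trans (measure_union_le _ _)
          _ = μ K₁ᶜ + ν K₂ᶜ := by
              rw [coupling_fst (hσ n) hK₁.isClosed.measurableSet.compl,
                coupling_snd (hσ n) hK₂.isClosed.measurableSet.compl]
          _ ≤ (ε : ℝ≥0∞) / 2 + (ε : ℝ≥0∞) / 2 := add_le_add hK₁c hK₂c
          _ = (ε : ℝ≥0∞) := ENNReal.add_halves _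
      calc (1 : ℝ≥0∞) = σ n univ := (hprob n).1.symm
        _ ≤ σ n (K₁ ×ˢ K₂) + σ n ((K₁ ×ˢ K₂)ᶜ) := by
            rw [← union_compl_self (K₁ ×ˢ K₂)] at *
            exact measure_union_le _ _
        _ ≤ σ n (K₁ ×ˢ K₂) + (ε : ℝ≥0∞) := add_le_add_right h2 _
    have h3 : (1 : ℝ≥0∞) - ε ≤ ℓ (K₁ ×ˢ K₂) :=
      le_ulim U fun n => tsub_le_iff_right.2 (hbound n)
    have h4 : ℓ (K₁ ×ˢ K₂) ≤ τ univ :=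
      hcpt_le _ (hK₁.prod hK₂) _ isOpen_univ (subset_univ _)
    exact tsub_le_iff_right.1 (h3.trans h4)
  haveI := hτ_prob
  -- first marginal
  have hmarg_fst : ∀ V : Set X, IsOpen V → μ V ≤ τ (Prod.fst ⁻¹' V) := by
    intro V hV
    by_contra hlt
    push_neg at hlt
    obtain ⟨r, hr1, hr2⟩ := exists_between hlt
    have claim : r ≤ τ (Prod.fst ⁻¹' V) := by
      obtain ⟨F, hFV, hFclosed, hrF⟩ := hV.exists_lt_isClosed hr2
      obtain ⟨c, hrc, hcF⟩ := exists_between hrF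
      have hsub_ne : μ F - c ≠ 0 := tsub_pos_of_lt hcF |>.ne'
      obtain ⟨T, hT, hTc⟩ := exists_isCompact_measure_compl_le μ hsub_ne
      set K' : Set X := F ∩ T with hK'def
      have hK'cpt : IsCompact K' := hT.inter_left hFclosed
      have hcK' : c ≤ μ K' := by
        have hsplit : μ F ≤ μ K' + μ Tᶜ := by
          refine (measure_mono ?_).trans (measure_union_le _ _)
          intro x hx
          by_cases hxT : x ∈ T
          · exact Or.inl ⟨hx, hxT⟩
          · exact Or.inr hxT
        have h5 : μ F ≤ μ K' + (μ F - c) := hsplit.trans (add_le_add_right hTc _)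
        have h6 : μ F - (μ F - c) ≤ μ K' := tsub_le_iff_right.2 h5
        rwa [ENNReal.sub_sub_cancel (measure_ne_top μ F) hcF.le] at h6
    -- now: μ K' ≤ τ (fst ⁻¹' V) + ε' for all ε'
      have hmain : ∀ ε' : ℝ≥0, 0 < ε' → μ K' ≤ τ (Prod.fst ⁻¹' V) + ε' := by
        intro ε' hε'
        have hε'' : ((ε' : ℝ≥0∞)) ≠ 0 := by exact_mod_cast hε'.ne'
        obtain ⟨T₂, hT₂, hT₂c⟩ := exists_isCompact_measure_compl_le ν hε''
        have hper : ∀ n, μ K' ≤ σ n (K' ×ˢ T₂) + (ε' : ℝ≥0∞) := by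
          intro n
          have h7 : Prod.fst ⁻¹' K' ⊆ (K' ×ˢ T₂) ∪ (Prod.snd ⁻¹' T₂ᶜ) := by
            intro z hz
            by_cases hzT : z.2 ∈ T₂
            · exact Or.inl ⟨hz, hzT⟩
            · exact Or.inr hzT
          calc μ K' = σ n (Prod.fst ⁻¹' K') :=
                (coupling_fst (hσ n) hK'cpt.isClosed.measurableSet).symm
            _ ≤ σ n (K' ×ˢ T₂) + σ n (Prod.snd ⁻¹' T₂ᶜ) :=
                (measure_mono h7).trans (measure_union_le _ _)
            _ = σ n (K' ×ˢ T₂) + ν T₂ᶜ := by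
                rw [coupling_snd (hσ n) hT₂.isClosed.measurableSet.compl]
            _ ≤ σ n (K' ×ˢ T₂) + (ε' : ℝ≥0∞) := add_le_add_right hT₂c _
        have h8 : μ K' - (ε' : ℝ≥0∞) ≤ ℓ (K' ×ˢ T₂) :=
          le_ulim U fun n => tsub_le_iff_right.2 (hper n)
        have h9 : ℓ (K' ×ˢ T₂) ≤ τ (Prod.fst ⁻¹' V) := by
          refine hcpt_le _ (hK'cpt.prod hT₂) _ (hV.preimage continuous_fst) ?_
          intro z hz
          exact hFV (hz.1.1)
        exact tsub_le_iff_right.1 (h8.trans h9)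
      have h10 : μ K' ≤ τ (Prod.fst ⁻¹' V) :=
        ENNReal.le_of_forall_pos_le_add fun ε' hε' _ => hmain ε' hε'
      exact (hrc.le.trans hcK').trans h10
    exact absurd claim (not_le.2 hr1)
  -- second marginal
  have hmarg_snd : ∀ V : Set X, IsOpen V → ν V ≤ τ (Prod.snd ⁻¹' V) := by
    intro V hV
    by_contra hlt
    push_neg at hlt
    obtain ⟨r, hr1, hr2⟩ := exists_between hlt
    have claim : r ≤ τ (Prod.snd ⁻¹' V) := by
      obtain ⟨F, hFV, hFclosed, hrF⟩ := hV.exists_lt_isClosed hr2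
      obtain ⟨c, hrc, hcF⟩ := exists_between hrF
      have hsub_ne : ν F - c ≠ 0 := tsub_pos_of_lt hcF |>.ne'
      obtain ⟨T, hT, hTc⟩ := exists_isCompact_measure_compl_le ν hsub_ne
      set K' : Set X := F ∩ T with hK'def
      have hK'cpt : IsCompact K' := hT.inter_left hFclosed
      have hcK' : c ≤ ν K' := by
        have hsplit : ν F ≤ ν K' + ν Tᶜ := by
          refine (measure_mono ?_).trans (measure_union_le _ _)
          intro x hx
          by_cases hxT : x ∈ T
          · exact Or.inl ⟨hx, hxT⟩
          · exact Or.inr hxT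
        have h5 : ν F ≤ ν K' + (ν F - c) := hsplit.trans (add_le_add_right hTc _)
        have h6 : ν F - (ν F - c) ≤ ν K' := tsub_le_iff_right.2 h5
        rwa [ENNReal.sub_sub_cancel (measure_ne_top ν F) hcF.le] at h6
      have hmain : ∀ ε' : ℝ≥0, 0 < ε' → ν K' ≤ τ (Prod.snd ⁻¹' V) + ε' := by
        intro ε' hε'
        have hε'' : ((ε' : ℝ≥0∞)) ≠ 0 := by exact_mod_cast hε'.ne'
        obtain ⟨T₂, hT₂, hT₂c⟩ := exists_isCompact_measure_compl_le μ hε''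
        have hper : ∀ n, ν K' ≤ σ n (T₂ ×ˢ K') + (ε' : ℝ≥0∞) := by
          intro n
          have h7 : Prod.snd ⁻¹' K' ⊆ (T₂ ×ˢ K') ∪ (Prod.fst ⁻¹' T₂ᶜ) := by
            intro z hz
            by_cases hzT : z.1 ∈ T₂
            · exact Or.inl ⟨hzT, hz⟩
            · exact Or.inr hzT
          calc ν K' = σ n (Prod.snd ⁻¹' K') :=
                (coupling_snd (hσ n) hK'cpt.isClosed.measurableSet).symm
            _ ≤ σ n (T₂ ×ˢ K') + σ n (Prod.fst ⁻¹' T₂ᶜ) :=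
                (measure_mono h7).trans (measure_union_le _ _)
            _ = σ n (T₂ ×ˢ K') + μ T₂ᶜ := by
                rw [coupling_fst (hσ n) hT₂.isClosed.measurableSet.compl]
            _ ≤ σ n (T₂ ×ˢ K') + (ε' : ℝ≥0∞) := add_le_add_right hT₂c _
        have h8 : ν K' - (ε' : ℝ≥0∞) ≤ ℓ (T₂ ×ˢ K') :=
          le_ulim U fun n => tsub_le_iff_right.2 (hper n)
        have h9 : ℓ (T₂ ×ˢ K') ≤ τ (Prod.snd ⁻¹' V) := by
          refine hcpt_le _ (hT₂.prod hK'cpt) _ (hV.preimage continuous_snd) ?_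
          intro z hz
          exact hFV (hz.2.1)
        exact tsub_le_iff_right.1 (h8.trans h9)
      have h10 : ν K' ≤ τ (Prod.snd ⁻¹' V) :=
        ENNReal.le_of_forall_pos_le_add fun ε' hε' _ => hmain ε' hε'
      exact (hrc.le.trans hcK').trans h10
    exact absurd claim (not_le.2 hr1)
  -- conclude the marginals are correct
  haveI : IsProbabilityMeasure (τ.map Prod.fst) :=
    Measure.isProbabilityMeasure_map measurable_fst.aemeasurable
  haveI : IsProbabilityMeasure (τ.map Prod.snd) :=
    Measure.isProbabilityMeasure_map measurable_snd.aemeasurable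
  have hfst : τ.map Prod.fst = μ := by
    refine prob_measure_eq_of_le_open μ (τ.map Prod.fst) fun V hV => ?_
    rw [Measure.map_apply measurable_fst hV.measurableSet]
    exact hmarg_fst V hV
  have hsnd : τ.map Prod.snd = ν := by
    refine prob_measure_eq_of_le_open ν (τ.map Prod.snd) fun V hV => ?_
    rw [Measure.map_apply measurable_snd hV.measurableSet]
    exact hmarg_snd V hV
  refine ⟨τ, ⟨hfst, hsnd⟩, ?_⟩
  refine le_antisymm ?_ zero_le
  calc τ G ≤ ℓ G := hopen_le G hG
    _ = 0 := ulim_of_tendsto U hUle h0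


section Main

variable {X : Type*} [MeasurableSpace X] [MetricSpace X] [BorelSpace X]

lemma wp_integrand_eq (σ : Measure (X × X)) (p : ℝ) :
    (∫⁻ z, ENNReal.ofReal (dist z.1 z.2) ^ p ∂σ) ^ (1 / p)
      = eLpNorm' (fun z : X × X => dist z.1 z.2) p σ := by
  rw [eLpNorm']
  congr 1
  refine lintegral_congr fun z => ?_
  rw [Real.enorm_eq_ofReal dist_nonneg]

lemma winf_integrand_eq (σ : Measure (X × X)) :
    essSup (fun z : X × X => ENNReal.ofReal (dist z.1 z.2)) σ
      = eLpNormEssSup (fun z : X × X => dist z.1 z.2) σ := by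
  rw [eLpNormEssSup]
  congr 1
  funext z
  rw [Real.enorm_eq_ofReal dist_nonneg]

lemma continuous_dist_prod : Continuous (fun z : X × X => dist z.1 z.2) :=
  continuous_fst.dist continuous_snd

theorem Wp_mono_and_tendsto_Winf_aux [CompleteSpace X] [TopologicalSpace.SeparableSpace X]
    (μ ν : Measure X) [IsProbabilityMeasure μ] [IsProbabilityMeasure ν] :
    (∀ p q : ℝ, 1 ≤ p → p ≤ q → Wp p μ ν ≤ Wp q μ ν) ∧
    Tendsto (fun p : ℝ => Wp p μ ν) atTop (nhds (Winf μ ν)) := by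
  have hmono : ∀ p q : ℝ, 1 ≤ p → p ≤ q → Wp p μ ν ≤ Wp q μ ν := by
    intro p q hp hpq
    refine le_iInf₂ fun σ hσ => (iInf₂_le σ hσ).trans ?_
    haveI := isProbabilityMeasure_of_coupling hσ
    rw [wp_integrand_eq, wp_integrand_eq]
    exact eLpNorm'_le_eLpNorm'_of_exponent_le (lt_of_lt_of_le zero_lt_one hp) hpq σ
      continuous_dist_prod.aestronglyMeasurable
  have heasy : ∀ q : ℝ, 0 < q → Wp q μ ν ≤ Winf μ ν := by
    intro q hq
    refine le_iInf₂ fun σ hσ => (iInf₂_le σ hσ).trans ?_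
    haveI := isProbabilityMeasure_of_coupling hσ
    rw [wp_integrand_eq, winf_integrand_eq]
    exact eLpNorm'_le_eLpNormEssSup hq
  set V : ℝ → ℝ≥0∞ := fun p => Wp (max 1 p) μ ν with hVdef
  have hVmono : Monotone V := fun a b hab =>
    hmono (max 1 a) (max 1 b) (le_max_left _ _) (max_le_max le_rfl hab)
  set S : ℝ≥0∞ := ⨆ p : ℝ, V p with hSdef
  have htendV : Tendsto V atTop (𝓝 S) := tendsto_atTop_iSup hVmono
  have heq : V =ᶠ[atTop] fun p : ℝ => Wp p μ ν := by
    filter_upwards [eventually_ge_atTop (1 : ℝ)] with p hp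
    rw [hVdef]
    simp only [max_eq_right hp]
  have hS_le : S ≤ Winf μ ν :=
    iSup_le fun p => heasy (max 1 p) (lt_of_lt_of_le zero_lt_one (le_max_left _ _))
  have hle_S : Winf μ ν ≤ S := by
    rcases eq_top_or_lt_top S with hStop | hSlt
    · rw [hStop]; exact le_top
    refine le_of_forall_gt_imp_ge_of_dense fun b hb => ?_
    obtain ⟨s', hSs', hs'b⟩ := exists_between hb
    obtain ⟨s, hSs, hss'⟩ := exists_between hSs'
    have hs'0 : s' ≠ 0 := ((zero_le : (0 : ℝ≥0∞) ≤ S).trans_lt hSs').ne'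
    have hs'top : s' ≠ ⊤ := (lt_of_lt_of_le hs'b le_top).ne
    have hs0 : s ≠ 0 := ((zero_le : (0 : ℝ≥0∞) ≤ S).trans_lt hSs).ne'
    have hstop : s ≠ ⊤ := hss'.trans_le (le_top.trans_eq rfl) |>.ne
    -- near-optimal couplings
    have hex : ∀ n : ℕ, ∃ σ ∈ couplingSet μ ν,
        (∫⁻ z, ENNReal.ofReal (dist z.1 z.2) ^ ((n : ℝ) + 1) ∂σ) ^ (1 / ((n : ℝ) + 1)) < s := by
      intro n
      have h1 : Wp ((n : ℝ) + 1) μ ν < s := by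
        have h2 : Wp ((n : ℝ) + 1) μ ν ≤ V ((n : ℝ) + 1) := by
          rw [hVdef]
          simp only [max_eq_right (by linarith [Nat.cast_nonneg (α := ℝ) n] : (1 : ℝ) ≤ (n : ℝ) + 1)]
          exact le_rfl
        exact (h2.trans (le_iSup V _)).trans_lt hSs
      by_contra hcon
      push_neg at hcon
      exact absurd (le_iInf₂ hcon : s ≤ Wp ((n : ℝ) + 1) μ ν) (not_le.2 h1)
    choose σ hσmem hσval using hex
    set e : X × X → ℝ≥0∞ := fun z => ENNReal.ofReal (dist z.1 z.2) with hedef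
    have he_cont : Continuous e := ENNReal.continuous_ofReal.comp continuous_dist_prod
    set G : Set (X × X) := {z | s' < e z} with hGdef
    have hGopen : IsOpen G := isOpen_lt continuous_const he_cont
    have hcheb : ∀ n : ℕ, σ n G ≤ (s / s') ^ (n + 1) := by
      intro n
      set p : ℝ := (n : ℝ) + 1 with hpdef
      have hp : 0 < p := by positivity
      have hint : (∫⁻ z, e z ^ p ∂σ n) < s ^ p := by
        have h2 := ENNReal.rpow_lt_rpow (hσval n) hp
        rwa [← ENNReal.rpow_mul, one_div, inv_mul_cancel₀ hp.ne', ENNReal.rpow_one] at h2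
      have hmeas : AEMeasurable (fun z => e z ^ p) (σ n) :=
        ((ENNReal.continuous_rpow_const.comp he_cont).measurable).aemeasurable
      have hcheb' := mul_meas_ge_le_lintegral₀ hmeas (s' ^ p)
      have hsub : G ⊆ {z | s' ^ p ≤ e z ^ p} :=
        fun z hz => ENNReal.rpow_le_rpow (le_of_lt hz) hp.le
      have h3 : s' ^ p * σ n G ≤ s ^ p :=
        ((mul_le_mul_right (measure_mono hsub) _).trans hcheb').trans hint.le
      have h4 : σ n G ≤ s ^ p / s' ^ p := by
        rw [ENNReal.le_div_iff_mul_le (Or.inl ?h0) (Or.inl ?htop), mul_comm]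
        · exact h3
        case h0 =>
          simp only [ne_eq, ENNReal.rpow_eq_zero_iff, not_or]
          push_neg
          exact ⟨fun h => absurd h hs'0, fun h => absurd h hs'top⟩
        case htop => exact ENNReal.rpow_ne_top_of_nonneg hp.le hs'top
      calc σ n G ≤ s ^ p / s' ^ p := h4
        _ = (s / s') ^ p := (ENNReal.div_rpow_of_nonneg _ _ hp.le).symm
        _ = (s / s') ^ (n + 1) := by
            rw [hpdef, show ((n : ℝ) + 1) = ((n + 1 : ℕ) : ℝ) by push_cast; ring,
              ENNReal.rpow_natCast]
    have hratio : s / s' < 1 := by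
      rw [ENNReal.div_lt_iff (Or.inl hs'0) (Or.inl hs'top), one_mul]
      exact hss'
    have htend0 : Tendsto (fun n => σ n G) atTop (𝓝 0) := by
      have hpow : Tendsto (fun n : ℕ => (s / s') ^ (n + 1)) atTop (𝓝 0) :=
        (ENNReal.tendsto_pow_atTop_nhds_zero_of_lt_one hratio).comp (tendsto_add_atTop_nat 1)
      exact tendsto_of_tendsto_of_tendsto_of_le_of_le tendsto_const_nhds hpow
        (fun n => zero_le) hcheb
    obtain ⟨τ, hτmem, hτG⟩ := exists_coupling_limit μ ν σ hσmem G hGopen htend0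
    have hess : essSup e τ ≤ s' := by
      refine essSup_le_of_ae_le s' ?_
      rw [Filter.EventuallyLE]
      rw [ae_iff]
      have : {z : X × X | ¬ e z ≤ s'} = G := by
        ext z
        simp [hGdef, not_le]
      rw [this]
      exact hτG
    calc Winf μ ν ≤ essSup e τ := iInf₂_le τ hτmem
      _ ≤ s' := hess
      _ ≤ b := hs'b.le
  have hSW : S = Winf μ ν := le_antisymm hS_le hle_S
  exact ⟨hmono, by rw [← hSW]; exact htendV.congr' heq⟩

end Main

end AuxWasserstein

/-- For Borel probability measures on a complete separable metric space,
`p ↦ W_p(μ,ν)` is nondecreasing on `[1,∞)` and `W_∞(μ,ν) = lim_{p→∞} W_p(μ,ν)`. -/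
theorem Wp_mono_and_tendsto_Winf {X : Type*} [MeasurableSpace X] [MetricSpace X]
    [BorelSpace X] [CompleteSpace X] [TopologicalSpace.SeparableSpace X]
    (μ ν : Measure X) [IsProbabilityMeasure μ] [IsProbabilityMeasure ν] :
    (∀ p q : ℝ, 1 ≤ p → p ≤ q → Wp p μ ν ≤ Wp q μ ν) ∧
    Tendsto (fun p : ℝ => Wp p μ ν) atTop (nhds (Winf μ ν)) := by
  exact Wp_mono_and_tendsto_Winf_aux μ ν
end

section
/- Let h : [0,∞) → [0,∞) be nondecreasing and continuous, (X,d) a complete separable metric space, and μ₀, μ₁, ν₀, ν₁ probability measures on X. Suppose there is a kernel x ↦ ρ_x from X to probability measures with ν_i = ∫ ρ_x dμ_i, and for μ₀⊗-a.e. pair (x,y) drawn from an optimal coupling γ of (μ₀,μ₁) there exists a coupling γ_{x,y} of (ρ_x, ρ_y) concentrated on {(u,v) : d(u,v) ≤ e^{−Kt} d(x,y)}. Then C_{h_{Kt}}(ν₀, ν₁) ≤ C_h(μ₀, μ₁), where h_{Kt}(r) := h(e^{Kt} r) and C_g denotes the optimal transport cost with cost g(d(·,·)). -/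
open MeasureTheory
open scoped ENNReal

/-- The optimal transport cost associated to the cost function `g(d(·,·))`. -/
noncomputable def transportCost {X : Type*} [MeasurableSpace X] [MetricSpace X]
    (g : ℝ → ℝ) (μ ν : Measure X) : ℝ≥0∞ :=
  ⨅ σ ∈ couplingSet μ ν, ∫⁻ z, ENNReal.ofReal (g (dist z.1 z.2)) ∂σ

/-- Contraction of transport costs under a kernel with `W_∞`-contracting
fiberwise couplings: if `ν_i = ∫ ρ_x dμ_i`, `γ` is an optimal coupling of
`(μ₀,μ₁)` for the cost `h(d)`, and for `γ`-a.e. `(x,y)` there is a coupling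
`γ_{x,y}` of `(ρ_x,ρ_y)` concentrated on `{d(u,v) ≤ e^{−Kt} d(x,y)}`, then
`C_{h_{Kt}}(ν₀,ν₁) ≤ C_h(μ₀,μ₁)` where `h_{Kt}(r) = h(e^{Kt} r)`. -/
theorem transportCost_contraction {X : Type*} [MeasurableSpace X] [MetricSpace X]
    [BorelSpace X] [CompleteSpace X] [TopologicalSpace.SeparableSpace X]
    (h : ℝ → ℝ) (hmono : MonotoneOn h (Set.Ici 0))
    (hcont : ContinuousOn h (Set.Ici 0)) (hnonneg : ∀ r : ℝ, 0 ≤ r → 0 ≤ h r)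
    (K t : ℝ) (ht : 0 ≤ t)
    (μ₀ μ₁ ν₀ ν₁ : Measure X)
    [IsProbabilityMeasure μ₀] [IsProbabilityMeasure μ₁]
    [IsProbabilityMeasure ν₀] [IsProbabilityMeasure ν₁]
    (ρ : X → Measure X) (hρmeas : Measurable ρ)
    (hρprob : ∀ x, IsProbabilityMeasure (ρ x))
    (hν₀ : ν₀ = μ₀.bind ρ) (hν₁ : ν₁ = μ₁.bind ρ)
    (γ : Measure (X × X)) (hγ : γ ∈ couplingSet μ₀ μ₁)
    (hγopt : ∫⁻ z, ENNReal.ofReal (h (dist z.1 z.2)) ∂γ = transportCost h μ₀ μ₁)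
    (γxy : X → X → Measure (X × X))
    (hγxymeas : Measurable fun p : X × X => γxy p.1 p.2)
    (hγxy : ∀ᵐ p ∂γ, γxy p.1 p.2 ∈ couplingSet (ρ p.1) (ρ p.2) ∧
      ∀ᵐ q ∂(γxy p.1 p.2), dist q.1 q.2 ≤ Real.exp (-(K * t)) * dist p.1 p.2) :
    transportCost (fun r => h (Real.exp (K * t) * r)) ν₀ ν₁ ≤
      transportCost h μ₀ μ₁ := by
  classical
  set κ : X × X → Measure (X × X) := fun p => γxy p.1 p.2 with hκdef
  set σ : Measure (X × X) := γ.bind κ with hσdef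
  -- marginals of σ
  have hfst : σ.map Prod.fst = ν₀ := by
    ext s hs
    rw [Measure.map_apply measurable_fst hs, hσdef,
      Measure.bind_apply (measurable_fst hs) hγxymeas.aemeasurable, hν₀,
      Measure.bind_apply hs hρmeas.aemeasurable, ← hγ.1,
      lintegral_map (Measure.measurable_measure.mp hρmeas s hs) measurable_fst]
    refine lintegral_congr_ae ?_
    filter_upwards [hγxy] with p hp
    rw [← hp.1.1, Measure.map_apply measurable_fst hs]
  have hsnd : σ.map Prod.snd = ν₁ := by
    ext s hs
    rw [Measure.map_apply measurable_snd hs, hσdef,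
      Measure.bind_apply (measurable_snd hs) hγxymeas.aemeasurable, hν₁,
      Measure.bind_apply hs hρmeas.aemeasurable, ← hγ.2,
      lintegral_map (Measure.measurable_measure.mp hρmeas s hs) measurable_snd]
    refine lintegral_congr_ae ?_
    filter_upwards [hγxy] with p hp
    rw [← hp.1.2, Measure.map_apply measurable_snd hs]
  have hσcoupling : σ ∈ couplingSet ν₀ ν₁ := ⟨hfst, hsnd⟩
  -- the cost integrand is measurable
  have hcont' : Continuous fun z : X × X => h (Real.exp (K * t) * dist z.1 z.2) := by
    refine hcont.comp_continuous (by continuity) fun z => ?_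
    exact mul_nonneg (Real.exp_pos _).le dist_nonneg
  have hmeasf : Measurable fun z : X × X =>
      ENNReal.ofReal (h (Real.exp (K * t) * dist z.1 z.2)) :=
    ENNReal.measurable_ofReal.comp hcont'.measurable
  -- the cost of σ is at most the cost of γ
  have hcost : ∫⁻ z, ENNReal.ofReal (h (Real.exp (K * t) * dist z.1 z.2)) ∂σ ≤
      ∫⁻ p, ENNReal.ofReal (h (dist p.1 p.2)) ∂γ := by
    rw [hσdef, Measure.lintegral_bind hγxymeas.aemeasurable hmeasf.aemeasurable]
    refine lintegral_mono_ae ?_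
    filter_upwards [hγxy] with p hp
    have hκuniv : κ p Set.univ = 1 := by
      have : (κ p).map Prod.fst Set.univ = ρ p.1 Set.univ := by rw [hp.1.1]
      rw [Measure.map_apply measurable_fst MeasurableSet.univ] at this
      simpa [(hρprob p.1).measure_univ] using this
    calc ∫⁻ q, ENNReal.ofReal (h (Real.exp (K * t) * dist q.1 q.2)) ∂(κ p)
        ≤ ∫⁻ _, ENNReal.ofReal (h (dist p.1 p.2)) ∂(κ p) := by
          refine lintegral_mono_ae ?_
          filter_upwards [hp.2] with q hq
          refine ENNReal.ofReal_le_ofReal ?_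
          have hle : Real.exp (K * t) * dist q.1 q.2 ≤ dist p.1 p.2 := by
            have := mul_le_mul_of_nonneg_left hq (Real.exp_pos (K * t)).le
            rwa [Real.exp_neg, ← mul_assoc, mul_inv_cancel₀ (Real.exp_pos _).ne',
              one_mul] at this
          exact hmono (mul_nonneg (Real.exp_pos _).le dist_nonneg) dist_nonneg hle
      _ = ENNReal.ofReal (h (dist p.1 p.2)) := by
          rw [lintegral_const, hκuniv, mul_one]
  calc transportCost (fun r => h (Real.exp (K * t) * r)) ν₀ ν₁
      ≤ ∫⁻ z, ENNReal.ofReal (h (Real.exp (K * t) * dist z.1 z.2)) ∂σ :=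
        iInf₂_le σ hσcoupling
    _ ≤ ∫⁻ p, ENNReal.ofReal (h (dist p.1 p.2)) ∂γ := hcost
    _ = transportCost h μ₀ μ₁ := hγopt
end
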